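/- Let f = x^α + x^β be a homogeneous binomial of degree d in 𝔹[x_0,…,x_n], and for e ≥ d let ∼_e be the equivalence relation on Δ^n_e generated by x^{α+γ} ∼_e x^{β+γ} for all x^γ ∈ Δ^n_{e−d}. Then the degree-e piece of the Macaulay tropical ideal [f]_e, defined as the tropical linear space of the transversal matroid presented by the pairs {x^{α+γ}, x^{β+γ}}, equals the submodule of 𝔹^{Δ^n_e} generated by all binomials x^u + x^v with x^u ∼_e x^v and u ≠ v. -/

import Mathlib

/-! STATEMENT 17: Let `f = x^α + x^β` be a homogeneous binomial of degree `d`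
in `𝔹[x_0,…,x_n]` (with `α ≠ β` modeled as multisets of size `d`), and for
`E ≥ d` let `∼_E` be the equivalence relation on the degree-`E` monomials
generated by `x^{α+γ} ∼ x^{β+γ}` for each degree-`(E-d)` monomial `γ`.  Then
the degree-`E` piece of the Macaulay tropical ideal `[f]_E` — the tropical
linear space (cocircuit span) of the transversal matroid presented by the
pairs `{x^{α+γ}, x^{β+γ}}` — equals the submodule of `𝔹^{Δ^n_E}` generated by
the binomials `x^u + x^v` with `x^u ∼_E x^v` and `u ≠ v`. -/

open scoped Classical

noncomputable section

/-- A submodule of `𝔹^ι`: contains `0` and is closed under pointwise `or`. -/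
def IsSubmodB {ι : Type*} (M : Set (ι → Bool)) : Prop :=
  (fun _ => false) ∈ M ∧ ∀ v ∈ M, ∀ w ∈ M, (fun i => v i || w i) ∈ M

/-- The submodule of `𝔹^ι` generated by a set of vectors. -/
def spanB {ι : Type*} (G : Set (ι → Bool)) : Set (ι → Bool) :=
  ⋂₀ {M | IsSubmodB M ∧ G ⊆ M}

variable {n d E : ℕ}

/-- `B` is a basis of the transversal matroid presented by the pairs
`{γ + α, γ + β}`, `γ` ranging over the degree-`(E-d)` monomials: `B` is the
image of an injective choice function picking one element of each pair. -/
def IsTransvBasis (α β : Multiset (Fin (n + 1)))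
    (B : Finset (Sym (Fin (n + 1)) E)) : Prop :=
  ∃ φ : Sym (Fin (n + 1)) (E - d) → Sym (Fin (n + 1)) E,
    Function.Injective φ ∧
    (∀ γ, (φ γ).toMultiset = γ.toMultiset + α ∨
          (φ γ).toMultiset = γ.toMultiset + β) ∧
    B = Finset.univ.image φ


/-!
Orient the pair `{γ + α, γ + β}` as an edge from `γ + α` to `γ + β`. For a variable `x_i` whose
exponent in `β` exceeds that in `α`, the exponent of `x_i` strictly increases along edges, and
every monomial is the tail of at most one edge and the head of at most one; hence every
`∼_E`-class is a directed path. The injective choice functions are then exactly the orientations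
of each path towards one of its vertices: the bases are the complements of the sets meeting every
class in exactly one point. So for `C` of size `rank - 1`, the monomials completing `C` to a basis
are either none or the two points of `Cᶜ` lying in a common class, and every pair `u ∼_E v` arises
in this way.
-/

theorem isSubmodB_spanB {ι : Type*} (G : Set (ι → Bool)) : IsSubmodB (spanB G) :=
  ⟨Set.mem_sInter.2 fun _ hM => hM.1.1, fun _ hv _ hw => Set.mem_sInter.2 fun M hM =>
    hM.1.2 _ (Set.mem_sInter.1 hv M hM) _ (Set.mem_sInter.1 hw M hM)⟩

theorem subset_spanB {ι : Type*} (G : Set (ι → Bool)) : G ⊆ spanB G :=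
  fun _ hg => Set.mem_sInter.2 fun _ hM => hM.2 hg

theorem spanB_minimal {ι : Type*} {G M : Set (ι → Bool)} (hM : IsSubmodB M) (hG : G ⊆ M) :
    spanB G ⊆ M :=
  fun _ hg => Set.mem_sInter.1 hg M ⟨hM, hG⟩

theorem spanB_eq_of_subset_of_subset_insert_zero {ι : Type*} {G H : Set (ι → Bool)}
    (hHG : H ⊆ G) (hGH : G ⊆ insert (fun _ => false) H) : spanB G = spanB H := by
  refine (spanB_minimal (isSubmodB_spanB H) ?_).antisymm
    (spanB_minimal (isSubmodB_spanB G) (hHG.trans (subset_spanB G)))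
  exact hGH.trans (Set.insert_subset (isSubmodB_spanB H).1 (subset_spanB H))

theorem Multiset.exists_count_lt_of_ne_of_card_eq {α : Type*} [DecidableEq α]
    {s t : Multiset α} (hne : s ≠ t) (hcard : Multiset.card s = Multiset.card t) :
    ∃ a, s.count a < t.count a := by
  by_contra! h
  exact hne (Multiset.eq_of_le_of_card_le (Multiset.le_iff_count.2 h) hcard.le).symm

section Transversal

variable {S : Type*} {r : S → S → Prop}

def IsTransversal (r : S → S → Prop) (T : Set S) : Prop :=
  ∀ x, ∃! t, t ∈ T ∧ r x t

theorem IsTransversal.insert_diff_singleton_iff (hr : Equivalence r) {T : Set S}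
    (hT : IsTransversal r T) {y t z : S} (hy : y ∉ T) (ht : t ∈ T) (hyt : r y t) :
    IsTransversal r (insert y T \ {z}) ↔ z = y ∨ z = t := by
  constructor
  · intro h
    by_contra hz
    obtain ⟨hzy, hzt⟩ := not_or.1 hz
    have hyt' : y = t :=
      (h y).unique ⟨⟨.inl rfl, Ne.symm hzy⟩, hr.refl y⟩ ⟨⟨.inr ht, Ne.symm hzt⟩, hyt⟩
    exact hy (hyt' ▸ ht)
  rintro (rfl | rfl)
  · rwa [Set.insert_sdiff_self_of_notMem hy]
  intro x
  by_cases hxy : r x y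
  · refine ⟨y, ⟨⟨.inl rfl, fun h => hy (h ▸ ht)⟩, hxy⟩, ?_⟩
    rintro s ⟨⟨rfl | hs, hsz⟩, hxs⟩
    · rfl
    · exact absurd ((hT x).unique ⟨hs, hxs⟩ ⟨ht, hr.trans hxy hyt⟩) hsz
  · obtain ⟨s, ⟨hs, hxs⟩, hs_unique⟩ := hT x
    refine ⟨s, ⟨⟨.inr hs, ?_⟩, hxs⟩, ?_⟩
    · rintro rfl
      exact hxy (hr.trans hxs (hr.symm hyt))
    · rintro s' ⟨⟨rfl | hs', -⟩, hxs'⟩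
      · exact absurd hxs' hxy
      · exact hs_unique s' ⟨hs', hxs'⟩

theorem exists_isTransversal_mem (hr : Equivalence r) (u : S) :
    ∃ T, IsTransversal r T ∧ u ∈ T := by
  let s : Setoid S := ⟨r, hr⟩
  let rep : S → S := fun x => if r x u then u else (⟦x⟧ : Quotient s).out
  have rel_rep (x : S) : r x (rep x) := by
    dsimp only [rep]
    split_ifs with h
    · exact h
    · exact hr.symm (Quotient.mk_out (s := s) x)
  have rep_eq {x y : S} (hxy : r x y) : rep x = rep y := by
    have hu : r x u ↔ r y u := ⟨hr.trans (hr.symm hxy), hr.trans hxy⟩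
    simp only [rep, hu, Quotient.sound (s := s) hxy]
  refine ⟨Set.range rep, fun x => ⟨rep x, ⟨⟨x, rfl⟩, rel_rep x⟩, ?_⟩, u, ?_⟩
  · rintro _ ⟨⟨y, rfl⟩, hxy⟩
    exact (rep_eq (hr.trans hxy (hr.symm (rel_rep y)))).symm
  · simp only [rep, hr.refl u, if_true]

theorem notMem_and_isTransversal_compl_insert_iff [DecidableEq S] (hr : Equivalence r)
    {T : Set S} (hT : IsTransversal r T) {y t : S} (hy : y ∉ T) (ht : t ∈ T) (hyt : r y t)
    {C : Finset S} (hC : (↑C)ᶜ = insert y T) (Y : S) :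
    (Y ∉ C ∧ IsTransversal r (↑(insert Y C))ᶜ) ↔ Y = y ∨ Y = t := by
  have hcompl : (↑(insert Y C) : Set S)ᶜ = insert y T \ {Y} := by
    rw [Finset.coe_insert, ← hC, Set.insert_eq, Set.compl_union, Set.sdiff_eq, Set.inter_comm]
  have hmem : Y ∉ C ↔ Y ∈ insert y T := by
    rw [← hC, Set.mem_compl_iff, Finset.mem_coe]
  rw [hcompl, hmem, hT.insert_diff_singleton_iff hr hy ht hyt]
  refine ⟨And.right, fun h => ⟨?_, h⟩⟩
  rcases h with rfl | rfl
  exacts [Set.mem_insert _ _, Set.mem_insert_of_mem _ ht]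

end Transversal

namespace PairPresentation

open Relation

variable {G S β : Type*} {A B : G → S}

def Edge (A B : G → S) (a b : S) : Prop :=
  ∃ γ, A γ = a ∧ B γ = b

def IsBasis [Fintype G] [DecidableEq S] (A B : G → S) (I : Finset S) : Prop :=
  ∃ φ : G → S, Function.Injective φ ∧ (∀ γ, φ γ = A γ ∨ φ γ = B γ) ∧ I = Finset.univ.image φ

section Potential

variable [Preorder β] {c : S → β}

theorem le_of_reflTransGen (hc : ∀ γ, c (A γ) < c (B γ)) {a b : S}
    (h : ReflTransGen (Edge A B) a b) : c a ≤ c b := by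
  induction h with
  | refl => exact le_rfl
  | tail _ hab ih =>
    obtain ⟨γ, rfl, rfl⟩ := hab
    exact ih.trans (hc γ).le

theorem lt_of_reflTransGen (hc : ∀ γ, c (A γ) < c (B γ)) {a b : S}
    (h : ReflTransGen (Edge A B) a b) (hab : a ≠ b) : c a < c b := by
  rcases h.cases_head with rfl | ⟨_, ⟨γ, rfl, rfl⟩, h⟩
  · exact absurd rfl hab
  · exact (hc γ).trans_le (le_of_reflTransGen hc h)

theorem eq_of_reflTransGen_of_reflTransGen (hc : ∀ γ, c (A γ) < c (B γ)) {a b : S}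
    (hab : ReflTransGen (Edge A B) a b) (hba : ReflTransGen (Edge A B) b a) : a = b := by
  by_contra hne
  exact (lt_of_reflTransGen hc hab hne).not_ge (le_of_reflTransGen hc hba)

end Potential

theorem reflTransGen_total_of_common_upper (hB : Function.Injective B) {a b w : S}
    (ha : ReflTransGen (Edge A B) a w) (hb : ReflTransGen (Edge A B) b w) :
    ReflTransGen (Edge A B) a b ∨ ReflTransGen (Edge A B) b a := by
  induction ha generalizing b with
  | refl => exact .inr hb
  | tail ha hw ih =>
    rcases hb.cases_tail with rfl | ⟨_, hb', γ', rfl, hγ'⟩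
    · exact .inl (ha.tail hw)
    · obtain ⟨γ, rfl, rfl⟩ := hw
      rw [hB hγ'] at hb'
      exact ih hb'

theorem reflTransGen_total_of_common_lower (hA : Function.Injective A) {a b w : S}
    (ha : ReflTransGen (Edge A B) w a) (hb : ReflTransGen (Edge A B) w b) :
    ReflTransGen (Edge A B) a b ∨ ReflTransGen (Edge A B) b a := by
  induction ha using ReflTransGen.head_induction_on generalizing b with
  | refl => exact .inl hb
  | head hw ha ih =>
    rcases hb.cases_head with rfl | ⟨_, ⟨γ', hγ', rfl⟩, hb'⟩
    · exact .inr (ha.head hw)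
    · obtain ⟨γ, rfl, rfl⟩ := hw
      rw [hA hγ'] at hb'
      exact ih hb'

theorem eqvGen_iff_reflTransGen (hA : Function.Injective A) (hB : Function.Injective B)
    {u v : S} :
    EqvGen (Edge A B) u v ↔ ReflTransGen (Edge A B) u v ∨ ReflTransGen (Edge A B) v u := by
  refine ⟨fun h => ?_, fun h => h.elim (EqvGen.reflTransGen_le_eqvGen _ _ _)
    fun h => (EqvGen.reflTransGen_le_eqvGen _ _ _ h).symm _ _⟩
  induction h with
  | rel a b h => exact .inl (.single h)
  | refl a => exact .inl .refl
  | symm a b _ ih => exact ih.symm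
  | trans a b e _ _ ih₁ ih₂ =>
    rcases ih₁ with h₁ | h₁ <;> rcases ih₂ with h₂ | h₂
    · exact .inl (h₁.trans h₂)
    · exact reflTransGen_total_of_common_upper hB h₁ h₂
    · exact reflTransGen_total_of_common_lower hA h₁ h₂
    · exact .inr (h₂.trans h₁)

theorem isBasis_of_isTransversal [Fintype G] [DecidableEq S] [Preorder β] {c : S → β}
    (hc : ∀ γ, c (A γ) < c (B γ)) (hA : Function.Injective A) (hB : Function.Injective B)
    {I : Finset S} (hI : IsTransversal (EqvGen (Edge A B)) (↑I)ᶜ) : IsBasis A B I := by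
  -- orient every chain towards its unique point outside `I`
  let below (x : S) : Prop := ∃ t ∉ I, ReflTransGen (Edge A B) x t
  have below_of_edge (γ : G) : below (B γ) → below (A γ) :=
    fun ⟨t, ht, h⟩ => ⟨t, ht, h.head ⟨γ, rfl, rfl⟩⟩
  let φ (γ : G) : S := if below (B γ) then A γ else B γ
  refine ⟨φ, fun γ γ' h => ?_, fun γ => by dsimp only [φ]; split_ifs <;> simp, ?_⟩
  · dsimp only [φ] at h
    split_ifs at h with h₁ h₂ h₂
    · exact hA h
    · exact absurd (h ▸ below_of_edge γ h₁) h₂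
    · exact absurd (h ▸ below_of_edge γ' h₂) h₁
    · exact hB h
  ext y
  simp only [Finset.mem_image, Finset.mem_univ, true_and]
  constructor
  · intro hy
    obtain ⟨t, ⟨ht, hyt⟩, ht_unique⟩ := hI y
    have hne : y ≠ t := fun h => ht (h ▸ hy)
    rcases (eqvGen_iff_reflTransGen hA hB).1 hyt with hyt | hty
    · rcases hyt.cases_head with rfl | ⟨_, ⟨γ, rfl, rfl⟩, h⟩
      · exact absurd rfl hne
      · exact ⟨γ, if_pos ⟨t, ht, h⟩⟩
    · rcases hty.cases_tail with rfl | ⟨_, -, γ, rfl, rfl⟩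
      · exact absurd rfl hne
      · refine ⟨γ, if_neg ?_⟩
        rintro ⟨t', ht', hyt'⟩
        have : t' = t :=
          ht_unique t' ⟨ht', EqvGen.reflTransGen_le_eqvGen _ _ _ hyt'⟩
        exact hne (eq_of_reflTransGen_of_reflTransGen hc (this ▸ hyt') hty)
  · rintro ⟨γ, rfl⟩
    by_contra hφ
    dsimp only [φ] at hφ ⊢
    split_ifs at hφ ⊢ with h
    · obtain ⟨t, ht, hBt⟩ := h
      have hAt : ReflTransGen (Edge A B) (A γ) t := hBt.head ⟨γ, rfl, rfl⟩
      have hAt' : A γ = t := (hI (A γ)).unique ⟨hφ, EqvGen.refl _⟩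
        ⟨ht, EqvGen.reflTransGen_le_eqvGen _ _ _ hAt⟩
      exact (hc γ).not_ge (hAt' ▸ le_of_reflTransGen hc hBt)
    · exact h ⟨B γ, hφ, .refl⟩

theorem exists_eq_choice_of_reflTransGen {φ : G → S} (hAB : ∀ γ, A γ ≠ B γ)
    (hφ : Function.Injective φ) (hφAB : ∀ γ, φ γ = A γ ∨ φ γ = B γ) {u v : S}
    (hu : u ∉ Set.range φ) (huv : ReflTransGen (Edge A B) u v) (hne : u ≠ v) :
    ∃ γ, B γ = v ∧ φ γ = v := by
  induction huv with
  | refl => exact absurd rfl hne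
  | @tail w _ huw hw ih =>
    obtain ⟨γ, rfl, rfl⟩ := hw
    refine ⟨γ, rfl, (hφAB γ).resolve_left fun hγ => ?_⟩
    by_cases huA : u = A γ
    · exact hu ⟨γ, hγ.trans huA.symm⟩
    · obtain ⟨γ', hγ', hφγ'⟩ := ih huA
      obtain rfl := hφ (hφγ'.trans hγ.symm)
      exact hAB γ' hγ'.symm

theorem exists_choice_eq_left_of_mem_range {φ : G → S} (hB : Function.Injective B)
    (hAB : ∀ γ, A γ ≠ B γ) (hφAB : ∀ γ, φ γ = A γ ∨ φ γ = B γ) {γ : G} (hγ : φ γ = A γ)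
    (hBγ : B γ ∈ Set.range φ) :
    ∃ γ', A γ' = B γ ∧ φ γ' = A γ' := by
  obtain ⟨γ', hγ'⟩ := hBγ
  rcases hφAB γ' with h | h
  · exact ⟨γ', h ▸ hγ', h⟩
  · obtain rfl := hB (h.symm.trans hγ')
    exact absurd (hγ.symm.trans h) (hAB _)

/-- The edge above a tail chosen by `φ` is again chosen by its tail, so a `c`-maximal such tail
cannot exist. -/
theorem choice_ne_left_of_subset_range [LinearOrder β] {c : S → β}
    (hc : ∀ γ, c (A γ) < c (B γ)) (hB : Function.Injective B) {φ : G → S}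
    (hφAB : ∀ γ, φ γ = A γ ∨ φ γ = B γ) {K : Finset S}
    (hK : ∀ γ, A γ ∈ K → B γ ∈ K) (hKφ : ↑K ⊆ Set.range φ) {γ : G} (hγK : A γ ∈ K) :
    φ γ ≠ A γ := by
  intro hγ
  let L := K.filter fun y => ∃ γ, A γ = y ∧ φ γ = y
  obtain ⟨_, hyL, hmax⟩ := L.exists_max_image c ⟨A γ, Finset.mem_filter.2 ⟨hγK, γ, rfl, hγ⟩⟩
  obtain ⟨hyK, γ, rfl, hγ⟩ := Finset.mem_filter.1 hyL
  obtain ⟨γ', hγ', hφγ'⟩ := exists_choice_eq_left_of_mem_range hB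
    (fun γ h => (hc γ).ne (congrArg c h)) hφAB hγ (hKφ (hK γ hyK))
  have := hmax (A γ') (Finset.mem_filter.2 ⟨hγ' ▸ hK γ hyK, γ', rfl, hφγ'⟩)
  exact (hc γ).not_ge (hγ' ▸ this)

theorem isTransversal_of_isBasis [Fintype G] [Fintype S] [DecidableEq S] [LinearOrder β]
    {c : S → β} (hc : ∀ γ, c (A γ) < c (B γ)) (hA : Function.Injective A)
    (hB : Function.Injective B) {I : Finset S} (hI : IsBasis A B I) :
    IsTransversal (EqvGen (Edge A B)) (↑I)ᶜ := by
  obtain ⟨φ, hφ, hφAB, rfl⟩ := hI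
  have hAB (γ : G) : A γ ≠ B γ := fun h => (hc γ).ne (congrArg c h)
  simp only [Finset.coe_image, Finset.coe_univ, Set.image_univ]
  intro x
  have unique {t₁ t₂ : S} (h₁ : t₁ ∉ Set.range φ) (h₂ : t₂ ∉ Set.range φ)
      (h : EqvGen (Edge A B) t₁ t₂) : t₁ = t₂ := by
    by_contra hne
    rcases (eqvGen_iff_reflTransGen hA hB).1 h with h | h
    · obtain ⟨γ, -, hγ⟩ := exists_eq_choice_of_reflTransGen hAB hφ hφAB h₁ h hne
      exact h₂ ⟨γ, hγ⟩
    · obtain ⟨γ, -, hγ⟩ := exists_eq_choice_of_reflTransGen hAB hφ hφAB h₂ h (Ne.symm hne)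
      exact h₁ ⟨γ, hγ⟩
  suffices ∃ t, t ∉ Set.range φ ∧ EqvGen (Edge A B) x t by
    obtain ⟨t, ht, hxt⟩ := this
    exact ⟨t, ⟨ht, hxt⟩, fun t' ⟨ht', hxt'⟩ => unique ht' ht ((hxt'.symm _ _).trans _ _ _ hxt)⟩
  by_contra! hcover
  let K := Finset.univ.filter (EqvGen (Edge A B) x)
  have hKφ : ↑K ⊆ Set.range φ := fun y hy => by
    by_contra h
    exact hcover y h (Finset.mem_filter.1 hy).2
  have hK (γ : G) : A γ ∈ K ↔ B γ ∈ K := by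
    have hAB : EqvGen (Edge A B) (A γ) (B γ) := .rel _ _ ⟨γ, rfl, rfl⟩
    simp only [K, Finset.mem_filter, Finset.mem_univ, true_and]
    exact ⟨fun h => h.trans _ _ _ hAB, fun h => h.trans _ _ _ (hAB.symm _ _)⟩
  obtain ⟨γ, rfl⟩ := hKφ (by simp [K, EqvGen.refl] : x ∈ K)
  rcases hφAB γ with h | h
  · exact choice_ne_left_of_subset_range hc hB hφAB (fun γ => (hK γ).1) hKφ
      (h ▸ by simp [K, EqvGen.refl]) h
  · exact choice_ne_left_of_subset_range (A := B) (B := A) (c := OrderDual.toDual ∘ c)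
      (fun γ => OrderDual.toDual_lt_toDual.2 (hc γ)) hA (fun γ => (hφAB γ).symm)
      (fun γ => (hK γ).2) hKφ (h ▸ by simp [K, EqvGen.refl]) h

theorem isBasis_iff_isTransversal [Fintype G] [Fintype S] [DecidableEq S] [LinearOrder β]
    {c : S → β} (hc : ∀ γ, c (A γ) < c (B γ)) (hA : Function.Injective A)
    (hB : Function.Injective B) {I : Finset S} :
    IsBasis A B I ↔ IsTransversal (EqvGen (Edge A B)) (↑I)ᶜ :=
  ⟨isTransversal_of_isBasis hc hA hB, isBasis_of_isTransversal hc hA hB⟩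

theorem IsBasis.card_eq [Fintype G] [DecidableEq S] {I : Finset S} (hI : IsBasis A B I) :
    I.card = Fintype.card G := by
  obtain ⟨φ, hφ, -, rfl⟩ := hI
  exact Finset.card_image_of_injective _ hφ

variable [Fintype G] [Fintype S] [DecidableEq S] [LinearOrder β] {c : S → β}

theorem exists_cocircuit_eq_pair_of_isBasis (hc : ∀ γ, c (A γ) < c (B γ))
    (hA : Function.Injective A) (hB : Function.Injective B) {C : Finset S} {Y₁ : S}
    (hY₁ : Y₁ ∉ C) (hb : IsBasis A B (insert Y₁ C)) :
    ∃ t, Y₁ ≠ t ∧ EqvGen (Edge A B) Y₁ t ∧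
      ∀ Y, (Y ∉ C ∧ IsBasis A B (insert Y C)) ↔ Y = Y₁ ∨ Y = t := by
  have hT := (isBasis_iff_isTransversal hc hA hB).1 hb
  obtain ⟨t, ⟨ht, hY₁t⟩, -⟩ := hT Y₁
  have hY₁T : Y₁ ∉ (↑(insert Y₁ C) : Set S)ᶜ := by simp
  have hC : (↑C : Set S)ᶜ = insert Y₁ (↑(insert Y₁ C))ᶜ := by
    ext z
    by_cases hz : z = Y₁ <;> simp [hz, hY₁]
  refine ⟨t, fun h => hY₁T (h ▸ ht), hY₁t, fun Y => ?_⟩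
  rw [isBasis_iff_isTransversal hc hA hB]
  exact notMem_and_isTransversal_compl_insert_iff (EqvGen.is_equivalence _) hT hY₁T ht hY₁t hC Y

theorem exists_cocircuit_eq_pair (hc : ∀ γ, c (A γ) < c (B γ)) (hA : Function.Injective A)
    (hB : Function.Injective B) {u v : S} (huv : u ≠ v) (hrel : EqvGen (Edge A B) u v) :
    ∃ C : Finset S, C.card = Fintype.card G - 1 ∧
      ∀ Y, (Y ∉ C ∧ IsBasis A B (insert Y C)) ↔ Y = u ∨ Y = v := by
  have hr := EqvGen.is_equivalence (Edge A B)
  obtain ⟨T, hT, huT⟩ := exists_isTransversal_mem hr u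
  have hvT : v ∉ T := fun hv => huv ((hT v).unique ⟨huT, hr.symm hrel⟩ ⟨hv, hr.refl v⟩)
  let I := Finset.univ.filter (· ∉ T)
  have hIT : (↑I : Set S)ᶜ = T := by ext; simp [I]
  have hI : IsBasis A B I := (isBasis_iff_isTransversal hc hA hB).2 (hIT ▸ hT)
  have hvI : v ∈ I := by simp [I, hvT]
  have hC : (↑(I.erase v) : Set S)ᶜ = insert v T := by
    rw [Finset.coe_erase, Set.compl_sdiff, hIT, Set.singleton_union]
  refine ⟨I.erase v, by rw [Finset.card_erase_of_mem hvI, hI.card_eq], fun Y => ?_⟩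
  rw [isBasis_iff_isTransversal hc hA hB, or_comm]
  exact notMem_and_isTransversal_compl_insert_iff hr hT hvT huT (hr.symm hrel) hC Y

theorem spanB_cocircuits_eq_spanB_pairs (hc : ∀ γ, c (A γ) < c (B γ))
    (hA : Function.Injective A) (hB : Function.Injective B) :
    spanB {g : S → Bool | ∃ C : Finset S, C.card = Fintype.card G - 1 ∧
        g = fun Y => decide (Y ∉ C ∧ IsBasis A B (insert Y C))} =
      spanB {g : S → Bool | ∃ u v : S, u ≠ v ∧ EqvGen (Edge A B) u v ∧
        g = fun Y => decide (Y = u ∨ Y = v)} := by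
  apply spanB_eq_of_subset_of_subset_insert_zero
  · rintro _ ⟨u, v, huv, hrel, rfl⟩
    obtain ⟨C, hC, hCY⟩ := exists_cocircuit_eq_pair hc hA hB huv hrel
    exact ⟨C, hC, funext fun Y => decide_eq_decide.2 (hCY Y).symm⟩
  · rintro _ ⟨C, -, rfl⟩
    by_cases hex : ∃ Y, Y ∉ C ∧ IsBasis A B (insert Y C)
    · obtain ⟨Y₁, hY₁, hb⟩ := hex
      obtain ⟨t, hne, hrel, hCY⟩ := exists_cocircuit_eq_pair_of_isBasis hc hA hB hY₁ hb
      exact .inr ⟨Y₁, t, hne, hrel, funext fun Y => decide_eq_decide.2 (hCY Y)⟩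
    · push Not at hex
      exact .inl (funext fun Y => decide_eq_false fun h => hex Y h.1 h.2)

end PairPresentation

theorem binomial_macaulay_piece_eq_equivalence_span
    (hdE : d ≤ E) (α β : Multiset (Fin (n + 1)))
    (hα : Multiset.card α = d) (hβ : Multiset.card β = d) (hne : α ≠ β) :
    -- the cocircuit span of the transversal matroid (of rank
    -- `|Δ^n_{E-d}|`) presented by the pairs `{γ+α, γ+β}` ...
    spanB {g : Sym (Fin (n + 1)) E → Bool |
        ∃ C : Finset (Sym (Fin (n + 1)) E),
          C.card = Fintype.card (Sym (Fin (n + 1)) (E - d)) - 1 ∧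
          g = fun Y => decide (Y ∉ C ∧
            IsTransvBasis (n := n) (d := d) α β (insert Y C))} =
      -- ... equals the span of the binomials supported on `∼_E`-classes
      spanB {g : Sym (Fin (n + 1)) E → Bool |
        ∃ u v : Sym (Fin (n + 1)) E, u ≠ v ∧
          Relation.EqvGen
            (fun a b => ∃ γ : Sym (Fin (n + 1)) (E - d),
              a.toMultiset = γ.toMultiset + α ∧
              b.toMultiset = γ.toMultiset + β) u v ∧
          g = fun Y => decide (Y = u ∨ Y = v)} := by
  have hcard (μ : Multiset (Fin (n + 1))) (hμ : Multiset.card μ = d)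
      (γ : Sym (Fin (n + 1)) (E - d)) : Multiset.card (γ.toMultiset + μ) = E := by
    rw [Multiset.card_add, Sym.card_coe, hμ, Nat.sub_add_cancel hdE]
  let shift μ hμ γ : Sym (Fin (n + 1)) E := ⟨γ.toMultiset + μ, hcard μ hμ γ⟩
  have shift_injective μ hμ : Function.Injective (shift μ hμ) := fun γ γ' h =>
    Sym.coe_injective (add_right_cancel (congrArg Sym.toMultiset h))
  obtain ⟨i, hi⟩ := Multiset.exists_count_lt_of_ne_of_card_eq hne (hα.trans hβ.symm)
  have hc γ : (shift α hα γ).toMultiset.count i < (shift β hβ γ).toMultiset.count i := by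
    change (γ.toMultiset + α).count i < (γ.toMultiset + β).count i
    rw [Multiset.count_add, Multiset.count_add]
    exact Nat.add_lt_add_left hi _
  have hbasis : IsTransvBasis (n := n) (d := d) α β =
      PairPresentation.IsBasis (shift α hα) (shift β hβ) := by
    funext I
    simp only [IsTransvBasis, PairPresentation.IsBasis, Sym.ext_iff]
    rfl
  have hedge : (fun a b : Sym (Fin (n + 1)) E => ∃ γ : Sym (Fin (n + 1)) (E - d),
      a.toMultiset = γ.toMultiset + α ∧ b.toMultiset = γ.toMultiset + β) =
      PairPresentation.Edge (shift α hα) (shift β hβ) := by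
    funext a b
    simp only [PairPresentation.Edge, Sym.ext_iff, eq_comm]
    rfl
  rw [hbasis, hedge]
  exact PairPresentation.spanB_cocircuits_eq_spanB_pairs (c := fun Y => Y.toMultiset.count i) hc
    (shift_injective α hα) (shift_injective β hβ)
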